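/- arXiv:1111.1187 — 2 statements merged into one kernel-verified Lean document; each statement's English description precedes it below -/
import Mathlib

section
/- Let p, q, r, s be integers with gcd(p,q) = 1, gcd(r,s) = 1, and |p*s - r*q| ≤ 4. Then there exist integers u, v with gcd(u,v) = 1 such that |p*v - u*q| = 1 and |r*v - u*s| = 1. -/
/-!
Writing `d = ps - rq`, pick a Farey neighbour `a/b` of `p/q` (so `pb - aq = 1`); every neighbour
of `p/q` is then `(a + tp)/(b + tq)`, and its determinant with `r/s` is `m - td` with
`m = rb - as`. Unimodularity of `(p, q; a, b)` makes `m` coprime to `d`, and for `|d| ≤ 4` the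
only units modulo `d` are `±1`, so some `t` makes `m - td = ±1`.
-/

theorem Int.dvd_sub_one_or_dvd_add_one_of_isCoprime {m d : ℤ} (hd : |d| ≤ 4)
    (h : IsCoprime m d) : d ∣ m - 1 ∨ d ∣ m + 1 := by
  rcases eq_or_ne d 0 with rfl | hd₀
  · rcases Int.isUnit_iff.mp (isCoprime_zero_right.mp h) with rfl | rfl <;> norm_num
  have h_unit : ∀ k : ℤ, k ∣ m → k ∣ d → k = 1 ∨ k = -1 := fun k hkm hkd =>
    Int.isUnit_iff.mp (h.isUnit_of_dvd' hkm hkd)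
  have h2 := h_unit 2
  have h3 := h_unit 3
  rcases abs_le.mp hd with ⟨hd₁, hd₂⟩
  clear hd
  interval_cases d
  all_goals (try simp only [neg_dvd]); omega

theorem Int.isCoprime_sub_mul_of_mul_sub_mul_eq_one {p q r s a b : ℤ}
    (hab : p * b - a * q = 1) (hrs : IsCoprime r s) :
    IsCoprime (r * b - a * s) (p * s - r * q) := by
  obtain ⟨x, y, hxy⟩ := hrs
  exact ⟨x * p + y * q, x * a + y * b, by linear_combination hxy + (x * r + y * s) * hab⟩

theorem stmt_0 (p q r s : ℤ) (hpq : Int.gcd p q = 1) (hrs : Int.gcd r s = 1)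
    (h : |p * s - r * q| ≤ 4) :
    ∃ u v : ℤ, Int.gcd u v = 1 ∧ |p * v - u * q| = 1 ∧ |r * v - u * s| = 1 := by
  obtain ⟨a, b, hab⟩ : ∃ a b, p * b - a * q = 1 := by
    obtain ⟨x, y, hxy⟩ := Int.isCoprime_iff_gcd_eq_one.mpr hpq
    exact ⟨-y, x, by linear_combination hxy⟩
  have hm := Int.isCoprime_sub_mul_of_mul_sub_mul_eq_one hab (Int.isCoprime_iff_gcd_eq_one.mpr hrs)
  obtain ⟨t, ht⟩ : ∃ t, |r * b - a * s - t * (p * s - r * q)| = 1 := by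
    rcases Int.dvd_sub_one_or_dvd_add_one_of_isCoprime h hm with ⟨t, ht⟩ | ⟨t, ht⟩
    · exact ⟨t, by rw [show r * b - a * s - t * _ = 1 by linear_combination ht, abs_one]⟩
    · exact ⟨t, by rw [show r * b - a * s - t * _ = -1 by linear_combination ht, abs_neg, abs_one]⟩
  refine ⟨a + t * p, b + t * q, ?_, ?_, ?_⟩
  · exact Int.isCoprime_iff_gcd_eq_one.mp ⟨-q, p, by linear_combination hab⟩
  · rw [show p * (b + t * q) - (a + t * p) * q = 1 by linear_combination hab, abs_one]
  · rwa [show r * (b + t * q) - (a + t * p) * s = r * b - a * s - t * (p * s - r * q) by ring]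
end

section
/- Let F be the Farey graph: vertices are pairs (p, q) of coprime integers up to simultaneous sign change (together with ∞ = (1,0)), and (p,q), (r,s) are adjacent iff |p*s - r*q| = 1. Then for any two coprime pairs (p,q), (r,s) with |p*s - r*q| ≤ 4, the graph distance between them in F is at most 2. -/
/-- A slope: a coprime pair of integers. -/
abbrev FareyPair := {v : ℤ × ℤ // IsCoprime v.1 v.2}

/-- Two coprime pairs are identified if they agree up to simultaneous sign change. -/
instance fareySetoid : Setoid FareyPair where
  r v w := v.1 = w.1 ∨ v.1 = -w.1
  iseqv := by
    constructor
    · intro v; exact Or.inl rfl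
    · rintro v w (h | h)
      · exact Or.inl h.symm
      · exact Or.inr (by rw [h, neg_neg])
    · rintro u v w (h1 | h1) (h2 | h2)
      · exact Or.inl (h1.trans h2)
      · exact Or.inr (h1.trans h2)
      · exact Or.inr (by rw [h1, h2])
      · exact Or.inl (by rw [h1, h2, neg_neg])

/-- Vertices of the Farey graph: coprime pairs of integers up to sign. -/
abbrev FareyVertex := Quotient fareySetoid

private lemma farey_adj_wd (a b a' b' : FareyPair) (ha : a ≈ a') (hb : b ≈ b') :
    (|a.1.1 * b.1.2 - b.1.1 * a.1.2| = 1) = (|a'.1.1 * b'.1.2 - b'.1.1 * a'.1.2| = 1) := by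
  have e1 : ∀ p q : ℤ × ℤ, p.1 * (-q).2 - (-q).1 * p.2 = -(p.1 * q.2 - q.1 * p.2) := by
    intro p q; simp only [Prod.fst_neg, Prod.snd_neg]; ring
  have e2 : ∀ p q : ℤ × ℤ, (-p).1 * q.2 - q.1 * (-p).2 = -(p.1 * q.2 - q.1 * p.2) := by
    intro p q; simp only [Prod.fst_neg, Prod.snd_neg]; ring
  have e3 : ∀ p q : ℤ × ℤ, (-p).1 * (-q).2 - (-q).1 * (-p).2 = p.1 * q.2 - q.1 * p.2 := by
    intro p q; simp only [Prod.fst_neg, Prod.snd_neg]; ring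
  have key : |a.1.1 * b.1.2 - b.1.1 * a.1.2| = |a'.1.1 * b'.1.2 - b'.1.1 * a'.1.2| := by
    rcases ha with ha | ha <;> rcases hb with hb | hb <;> rw [ha, hb]
    · rw [e1, abs_neg]
    · rw [e2, abs_neg]
    · rw [show (-a'.1).1 * (-b'.1).2 - (-b'.1).1 * (-a'.1).2
            = a'.1.1 * b'.1.2 - b'.1.1 * a'.1.2 from e3 a'.1 b'.1]
  rw [key]

/-- The Farey graph: vertices are coprime pairs `(p, q)` of integers up to sign,
with `(p, q)` and `(r, s)` adjacent iff `|p * s - r * q| = 1`. -/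
def Farey : SimpleGraph FareyVertex where
  Adj x y := Quotient.lift₂ (fun v w : FareyPair => |v.1.1 * w.1.2 - w.1.1 * v.1.2| = 1)
    farey_adj_wd x y
  symm := by
    constructor
    intro x y
    induction x using Quotient.ind
    induction y using Quotient.ind
    intro h
    simpa [abs_sub_comm] using h
  loopless := by
    constructor
    intro x
    induction x using Quotient.ind
    simp [mul_comm]

/- Write `v = (p, q)` with `x p + y q = 1`. The neighbours of `v` are the
`u_t = (t p - y, t q + x)`, and `det(u_t, w) = t k - a` with `k = det(v, w)`, `a = x r + y s`
coprime to `k`. For `|k| ≤ 4` the only units modulo `k` are `±1`, so some `t` gives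
`|t k - a| = 1`, making `u_t` a common neighbour of `v` and `w`. -/

namespace Int

theorem dvd_sub_one_or_dvd_add_one_of_isCoprime_s10 {a k : ℤ} (hk : |k| ≤ 4) (h : IsCoprime a k) :
    k ∣ a - 1 ∨ k ∣ a + 1 := by
  have h2 : ¬ ((2 : ℤ) ∣ a ∧ 2 ∣ k) := fun ⟨ha, hk⟩ => by
    simpa [Int.isUnit_iff] using h.isUnit_of_dvd' ha hk
  have h3 : ¬ ((3 : ℤ) ∣ a ∧ 3 ∣ k) := fun ⟨ha, hk⟩ => by
    simpa [Int.isUnit_iff] using h.isUnit_of_dvd' ha hk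
  rcases eq_or_ne k 0 with rfl | hk₀
  · rcases Int.isUnit_iff.mp (isCoprime_zero_right.mp h) with rfl | rfl <;> simp
  obtain ⟨hk₁, hk₂⟩ := abs_le.mp hk
  interval_cases k <;> (try rw [Int.neg_dvd, Int.neg_dvd]) <;> omega

theorem exists_abs_mul_sub_eq_one_of_isCoprime {a k : ℤ} (hk : |k| ≤ 4) (h : IsCoprime a k) :
    ∃ t : ℤ, |t * k - a| = 1 := by
  rcases dvd_sub_one_or_dvd_add_one_of_isCoprime_s10 hk h with ⟨t, ht⟩ | ⟨t, ht⟩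
  · exact ⟨t, by rw [show t * k - a = -1 by linarith, abs_neg, abs_one]⟩
  · exact ⟨t, by rw [show t * k - a = 1 by linarith, abs_one]⟩

end Int

theorem exists_farey_common_neighbor (v w : FareyPair)
    (h : |v.1.1 * w.1.2 - w.1.1 * v.1.2| ≤ 4) :
    ∃ u : FareyPair, Farey.Adj ⟦v⟧ ⟦u⟧ ∧ Farey.Adj ⟦u⟧ ⟦w⟧ := by
  obtain ⟨⟨p, q⟩, x, y, hxy⟩ := v
  obtain ⟨⟨r, s⟩, c, d, hcd⟩ := w
  have hak : IsCoprime (x * r + y * s) (p * s - r * q) :=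
    ⟨c * p + d * q, d * x - c * y, by linear_combination (c * r + d * s) * hxy + hcd⟩
  obtain ⟨t, ht⟩ := Int.exists_abs_mul_sub_eq_one_of_isCoprime h hak
  have hvu : p * (t * q + x) - (t * p - y) * q = 1 := by linear_combination hxy
  refine ⟨⟨(t * p - y, t * q + x), -q, p, by linear_combination hvu⟩, ?_, ?_⟩
  · show |p * (t * q + x) - (t * p - y) * q| = 1
    rw [hvu, abs_one]
  · show |(t * p - y) * s - r * (t * q + x)| = 1
    rw [← ht]
    congr 1
    ring

theorem stmt_10 (v w : FareyPair) (h : |v.1.1 * w.1.2 - w.1.1 * v.1.2| ≤ 4) :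
    Farey.dist ⟦v⟧ ⟦w⟧ ≤ 2 := by
  obtain ⟨u, hvu, huw⟩ := exists_farey_common_neighbor v w h
  exact Farey.dist_le (.cons hvu (.cons huw .nil))
end
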